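/- arXiv:1109.5829 — 3 statements merged into one kernel-verified Lean document; each statement's English description precedes it below -/
import Mathlib

section
/- Let m ≥ 0, t > 0, and define p_t(s) = (t e^{tm} / √(2π s³)) · exp(−(t²/s + m² s)/2) for s > 0. Then for every real number u with 2u + m² ≥ 0, one has ∫₀^∞ e^{−us} p_t(s) ds = exp(−t(√(2u + m²) − m)). In particular (taking u = 0) p_t is a probability density on (0,∞), and for every c with 2c < m² one has ∫₀^∞ e^{cs} p_t(s) ds = exp(t(m − √(m² − 2c))) < ∞. -/
/-!
After the substitution `s = (t/u)²`, the density `p_t` with mass `a` becomes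
`(2/√(2π)) · exp (-(u - at/u)²/2)` on `(0, ∞)`. By the Cauchy–Schlömilch substitution
`x = u - b/u`, a bijection `(0, ∞) → ℝ` whose Jacobian `1 + b/u²` splits into two halves
exchanged by `u ↦ b/u`, an even integrable `g` satisfies `2 ∫₀^∞ g(u - b/u) du = ∫_ℝ g`.
Hence `p_t` integrates to `1` for every mass `a ≥ 0`. Completing the square,
`e^{-us} p_t(s) = e^{-t(a - m)} · (p_t with mass a)` for `a = √(2u + m²)`, which gives the
Laplace transform.
-/

open MeasureTheory

/-- The density of the relativistic `1/2`-stable subordinator with mass parameter `m`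
at time `t`, evaluated at `s > 0`:
`p_t(s) = (t e^{tm} / √(2π s³)) · exp(−(t²/s + m² s)/2)`. -/
noncomputable def relSubordinatorDensity (m t s : ℝ) : ℝ :=
  t * Real.exp (t * m) / Real.sqrt (2 * Real.pi * s ^ 3) *
    Real.exp (-(t ^ 2 / s + m ^ 2 * s) / 2)

open Set Real

section ChangeOfVariables

variable {E : Type*} [NormedAddCommGroup E] [NormedSpace ℝ E]

theorem integral_Ioi_div_sq_smul_comp_div (g : ℝ → E) {b : ℝ} (hb : 0 < b) :
    ∫ u in Ioi 0, (b / u ^ 2) • g (b / u) = ∫ u in Ioi 0, g u := by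
  have hinv : ∀ u ∈ Ioi (0 : ℝ), b / (b / u) = u := fun u hu => div_div_cancel₀ hb.ne'
  have himage : (b / ·) '' Ioi (0 : ℝ) = Ioi 0 :=
    Subset.antisymm (image_subset_iff.2 fun u hu => div_pos hb hu)
      fun u hu => ⟨b / u, div_pos hb hu, hinv u hu⟩
  have hderiv : ∀ u ∈ Ioi (0 : ℝ), HasDerivWithinAt (b / ·) (-(b / u ^ 2)) (Ioi 0) u := by
    intro u hu
    refine ((hasDerivAt_const u b).fun_div (hasDerivAt_id' u) hu.out.ne').hasDerivWithinAt
      |>.congr_deriv ?_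
    ring
  have hinj : InjOn (b / ·) (Ioi (0 : ℝ)) := fun u hu v hv huv => by
    simpa [hinv u hu, hinv v hv] using congrArg (b / ·) huv
  have := integral_image_eq_integral_abs_deriv_smul measurableSet_Ioi hderiv hinj g
  rw [himage] at this
  rw [this]
  refine setIntegral_congr_fun measurableSet_Ioi fun u hu => ?_
  rw [abs_neg, abs_of_pos (div_pos hb (pow_pos hu.out 2))]

theorem integral_Ioi_smul_comp_div_sq (g : ℝ → E) {t : ℝ} (ht : 0 < t) :
    ∫ u in Ioi 0, (2 * t ^ 2 / u ^ 3) • g ((t / u) ^ 2) = ∫ s in Ioi 0, g s := by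
  conv_rhs => rw [← integral_comp_rpow_Ioi_of_pos two_pos,
    ← integral_Ioi_div_sq_smul_comp_div _ ht]
  refine setIntegral_congr_fun measurableSet_Ioi fun u hu => ?_
  have hu : u ≠ 0 := hu.out.ne'
  rw [smul_smul, rpow_two, show (2 : ℝ) - 1 = 1 by norm_num, rpow_one]
  congr 1
  field_simp

end ChangeOfVariables

section CauchySchlomilch

theorem hasDerivAt_sub_div (b : ℝ) {u : ℝ} (hu : u ≠ 0) :
    HasDerivAt (fun u => u - b / u) (1 + b / u ^ 2) u := by
  refine ((hasDerivAt_id' u).sub ((hasDerivAt_const u b).fun_div (hasDerivAt_id' u) hu))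
    |>.congr_deriv ?_
  ring

variable {E : Type*} [NormedAddCommGroup E] [NormedSpace ℝ E] {b : ℝ}

theorem injOn_sub_div_Ioi (hb : 0 ≤ b) : InjOn (fun u => u - b / u) (Ioi 0) := by
  intro u hu v hv huv
  have hu : 0 < u := hu
  have hv : 0 < v := hv
  simp only at huv
  field_simp at huv
  nlinarith [mul_pos hu hv]

theorem image_sub_div_Ioi (hb : 0 < b) : (fun u => u - b / u) '' Ioi 0 = univ := by
  refine eq_univ_of_forall fun y => ?_
  set D := √(y ^ 2 + 4 * b)
  have hD : D ^ 2 = y ^ 2 + 4 * b := sq_sqrt (by positivity)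
  have hyD : |y| < D := by
    rw [← sqrt_sq_eq_abs]
    exact sqrt_lt_sqrt (sq_nonneg y) (by linarith)
  have hu : 0 < (y + D) / 2 := by linarith [neg_abs_le y]
  refine ⟨(y + D) / 2, hu, ?_⟩
  have : y + D ≠ 0 := (by linarith : 0 < y + D).ne'
  field_simp
  linear_combination hD

theorem integral_Ioi_one_add_div_sq_smul_comp_sub_div (g : ℝ → E) (hb : 0 < b) :
    ∫ u in Ioi 0, (1 + b / u ^ 2) • g (u - b / u) = ∫ x, g x := by
  have := integral_image_eq_integral_abs_deriv_smul measurableSet_Ioi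
    (fun u hu => (hasDerivAt_sub_div b hu.out.ne').hasDerivWithinAt) (injOn_sub_div_Ioi hb.le) g
  rw [image_sub_div_Ioi hb, setIntegral_univ] at this
  rw [this]
  refine setIntegral_congr_fun measurableSet_Ioi fun u _ => ?_
  rw [abs_of_pos (by positivity)]

theorem integrableOn_Ioi_one_add_div_sq_smul_comp_sub_div {g : ℝ → E}
    (hg : Integrable g) (hb : 0 < b) :
    IntegrableOn (fun u => (1 + b / u ^ 2) • g (u - b / u)) (Ioi 0) := by
  have := (integrableOn_image_iff_integrableOn_abs_deriv_smul measurableSet_Ioi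
    (fun u hu => (hasDerivAt_sub_div b hu.out.ne').hasDerivWithinAt)
    (injOn_sub_div_Ioi hb.le) g).1 (by rw [image_sub_div_Ioi hb]; exact hg.integrableOn)
  refine this.congr_fun (fun u _ => ?_) measurableSet_Ioi
  simp only [abs_of_pos (by positivity : 0 < 1 + b / u ^ 2)]

theorem integrableOn_Ioi_comp_sub_div {g : ℝ → E} (hg : Integrable g) (hb : 0 < b) :
    IntegrableOn (fun u => g (u - b / u)) (Ioi 0) := by
  have hjac_pos : ∀ u : ℝ, 0 < 1 + b / u ^ 2 := fun u => by positivity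
  refine IntegrableOn.congr_fun
    ((integrableOn_Ioi_one_add_div_sq_smul_comp_sub_div hg hb).bdd_smul 1
      (φ := fun u => (1 + b / u ^ 2)⁻¹)
      (by fun_prop : Measurable fun u : ℝ => (1 + b / u ^ 2)⁻¹).aestronglyMeasurable
      (Filter.Eventually.of_forall fun u => ?_)) (fun u _ => ?_) measurableSet_Ioi
  · rw [norm_inv, Real.norm_of_nonneg (hjac_pos u).le]
    exact inv_le_one_of_one_le₀ (le_add_of_nonneg_right (by positivity))
  · simp only [Pi.smul_apply']
    rw [inv_smul_smul₀ (hjac_pos u).ne']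

theorem two_smul_integral_Ioi_comp_sub_div {g : ℝ → E} (hg : Integrable g)
    (heven : Function.Even g) (hb : 0 < b) :
    (2 : ℝ) • ∫ u in Ioi 0, g (u - b / u) = ∫ x, g x := by
  have hint := integrableOn_Ioi_comp_sub_div hg hb
  have hint_rest : IntegrableOn (fun u => (b / u ^ 2) • g (u - b / u)) (Ioi 0) :=
    ((integrableOn_Ioi_one_add_div_sq_smul_comp_sub_div hg hb).sub hint).congr_fun
      (fun u _ => by simp only [Pi.sub_apply, add_smul, one_smul, add_sub_cancel_left])
      measurableSet_Ioi
  have hsymm : ∫ u in Ioi 0, (b / u ^ 2) • g (u - b / u) = ∫ u in Ioi 0, g (u - b / u) := by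
    refine Eq.trans (setIntegral_congr_fun measurableSet_Ioi fun u hu => ?_)
      (integral_Ioi_div_sq_smul_comp_div (fun u => g (u - b / u)) hb)
    have hu : u ≠ 0 := hu.out.ne'
    rw [show b / u - b / (b / u) = -(u - b / u) by field_simp; ring, heven]
  calc (2 : ℝ) • ∫ u in Ioi 0, g (u - b / u)
      = (∫ u in Ioi 0, g (u - b / u)) + ∫ u in Ioi 0, (b / u ^ 2) • g (u - b / u) := by
        rw [hsymm, two_smul]
    _ = ∫ u in Ioi 0, (1 + b / u ^ 2) • g (u - b / u) := by
        rw [← integral_add hint hint_rest]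
        simp only [add_smul, one_smul]
    _ = ∫ x, g x := integral_Ioi_one_add_div_sq_smul_comp_sub_div g hb

end CauchySchlomilch

theorem integral_Ioi_exp_neg_sq_sub_div {b : ℝ} (hb : 0 ≤ b) :
    ∫ u in Ioi 0, exp (-(u - b / u) ^ 2 / 2) = √(2 * π) / 2 := by
  have hhalf : ∀ x : ℝ, -x ^ 2 / 2 = -(1 / 2) * x ^ 2 := fun x => by ring
  have htwo : π / (1 / 2) = 2 * π := by ring
  rcases hb.eq_or_lt with rfl | hb
  · simp only [zero_div, sub_zero, hhalf, integral_gaussian_Ioi, htwo]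
  · have h := two_smul_integral_Ioi_comp_sub_div (g := fun x => exp (-x ^ 2 / 2))
      (by simpa only [hhalf] using integrable_exp_neg_mul_sq one_half_pos)
      (fun x => by simp only [neg_sq]) hb
    simp only [hhalf, integral_gaussian, smul_eq_mul, htwo] at h
    simp only [hhalf]
    linarith

theorem div_sq_mul_relSubordinatorDensity_div_sq (a : ℝ) {t u : ℝ} (ht : 0 < t) (hu : 0 < u) :
    2 * t ^ 2 / u ^ 3 * relSubordinatorDensity a t ((t / u) ^ 2)
      = 2 / √(2 * π) * exp (-(u - a * t / u) ^ 2 / 2) := by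
  have hsqrt : √(2 * π * ((t / u) ^ 2) ^ 3) = √(2 * π) * (t / u) ^ 3 := by
    rw [sqrt_mul (by positivity), show ((t / u) ^ 2) ^ 3 = ((t / u) ^ 3) ^ 2 by ring,
      sqrt_sq (by positivity)]
  have hexp : exp (t * a) * exp (-(t ^ 2 / (t / u) ^ 2 + a ^ 2 * (t / u) ^ 2) / 2)
      = exp (-(u - a * t / u) ^ 2 / 2) := by
    rw [← exp_add]
    congr 1
    field_simp
    ring
  rw [relSubordinatorDensity, hsqrt, ← hexp]
  field_simp

theorem integral_relSubordinatorDensity {a t : ℝ} (ha : 0 ≤ a) (ht : 0 < t) :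
    ∫ s in Ioi 0, relSubordinatorDensity a t s = 1 := by
  rw [← integral_Ioi_smul_comp_div_sq _ ht]
  simp only [smul_eq_mul]
  rw [setIntegral_congr_fun measurableSet_Ioi fun u hu =>
      div_sq_mul_relSubordinatorDensity_div_sq a ht hu,
    integral_const_mul, integral_Ioi_exp_neg_sq_sub_div (mul_nonneg ha ht.le)]
  field_simp

theorem exp_neg_mul_mul_relSubordinatorDensity {m a u : ℝ} (h : a ^ 2 = 2 * u + m ^ 2)
    (t s : ℝ) :
    exp (-(u * s)) * relSubordinatorDensity m t s
      = exp (-(t * (a - m))) * relSubordinatorDensity a t s := by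
  have hexp : exp (-(u * s)) * exp (t * m) * exp (-(t ^ 2 / s + m ^ 2 * s) / 2)
      = exp (-(t * (a - m))) * exp (t * a) * exp (-(t ^ 2 / s + a ^ 2 * s) / 2) := by
    simp only [← exp_add, h]
    ring_nf
  simp only [relSubordinatorDensity, mul_div_assoc]
  linear_combination (t / √(2 * π * s ^ 3)) * hexp

theorem integral_exp_neg_mul_relSubordinatorDensity {m t u : ℝ} (ht : 0 < t)
    (hu : 0 ≤ 2 * u + m ^ 2) :
    ∫ s in Ioi 0, exp (-(u * s)) * relSubordinatorDensity m t s
      = exp (-(t * (√(2 * u + m ^ 2) - m))) := by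
  simp only [exp_neg_mul_mul_relSubordinatorDensity (sq_sqrt hu), integral_const_mul,
    integral_relSubordinatorDensity (sqrt_nonneg _) ht, mul_one]

/-- Laplace transform of the relativistic `1/2`-stable subordinator density:
for `2u + m² ≥ 0`, `∫₀^∞ e^{−us} p_t(s) ds = exp(−t(√(2u+m²) − m))`; in particular
`p_t` is a probability density on `(0,∞)`, and for `2c < m²` one has
`∫₀^∞ e^{cs} p_t(s) ds = exp(t(m − √(m² − 2c))) < ∞`. -/
theorem laplace_transform_relSubordinatorDensity (m t : ℝ) (hm : 0 ≤ m) (ht : 0 < t) :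
    (∀ u : ℝ, 0 ≤ 2 * u + m ^ 2 →
      ∫ s in Set.Ioi (0 : ℝ), Real.exp (-(u * s)) * relSubordinatorDensity m t s
        = Real.exp (-(t * (Real.sqrt (2 * u + m ^ 2) - m)))) ∧
    (∫ s in Set.Ioi (0 : ℝ), relSubordinatorDensity m t s = 1) ∧
    (∀ c : ℝ, 2 * c < m ^ 2 →
      IntegrableOn (fun s => Real.exp (c * s) * relSubordinatorDensity m t s)
          (Set.Ioi (0 : ℝ)) ∧
      ∫ s in Set.Ioi (0 : ℝ), Real.exp (c * s) * relSubordinatorDensity m t s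
        = Real.exp (t * (m - Real.sqrt (m ^ 2 - 2 * c)))) := by
  refine ⟨fun u hu => integral_exp_neg_mul_relSubordinatorDensity ht hu,
    integral_relSubordinatorDensity hm ht, fun c hc => ?_⟩
  have hlaplace : ∫ s in Ioi 0, exp (c * s) * relSubordinatorDensity m t s
      = exp (t * (m - √(m ^ 2 - 2 * c))) := by
    convert integral_exp_neg_mul_relSubordinatorDensity (m := m) (u := -c) ht (by linarith) using 3
    · simp only [neg_mul, neg_neg]
    · ring_nf
  exact ⟨Integrable.of_integral_ne_zero (hlaplace ▸ (exp_pos _).ne'), hlaplace⟩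
end

section
/- Let m ≥ 0, t > 0, ξ ∈ ℝ³, z ∈ ℝ, and define p_t(s) = (t e^{tm} / √(2π s³)) · exp(−(t²/s + m² s)/2) for s > 0. Then ∫₀^∞ p_t(s) · e^{−s|ξ|²/2} · (cos z + i e^{−2s} sin z) ds = exp(−t(√(|ξ|² + m²) − m)) cos z + i · exp(−t(√(|ξ|² + 4 + m²) − m)) sin z. (This is the characteristic function E[e^{i ξ·B_{T_t}} e^{i z θ_{T_t}}] of the joint process q_t = (B_{T_t}, θ_{T_t}), where B is three-dimensional Brownian motion, θ_s = (−1)^{N_s} with N a unit-intensity Poisson process, and T the relativistic subordinator, all independent.) -/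
/-!
Substituting `s = t² / (2 w²)` turns `p_t(s) ds` into a multiple of
`exp (-w² - (m t / 2)² / w²) dw`, whose integral over `(0, ∞)` is `(√π / 2) e^{-m t}` by the
Cauchy–Schlömilch substitution `u = w - c / w`; hence `p_t` is a probability density.
Multiplying `p_t` by `e^{-c s / 2}` amounts, up to the factor `e^{-t (√(c + m²) - m)}`, to
replacing `m` by `√(c + m²)` (exponential tilting), which yields the Laplace transform of `T_t`.
The characteristic function is a sum of two such transforms, with `c = |ξ|²` and, since
`e^{-2s} e^{-s |ξ|² / 2} = e^{-s (|ξ|² + 4) / 2}`, with `c = |ξ|² + 4`.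
-/

open MeasureTheory

open Set Real

theorem hasDerivAt_const_div (b : ℝ) {w : ℝ} (hw : w ≠ 0) :
    HasDerivAt (fun x : ℝ => b / x) (-(b / w ^ 2)) w := by
  simpa [div_eq_mul_inv, neg_div] using (hasDerivAt_inv hw).const_mul b

theorem image_const_div_Ioi {b : ℝ} (hb : 0 < b) : (fun w : ℝ => b / w) '' Ioi 0 = Ioi 0 := by
  refine Subset.antisymm (image_subset_iff.2 fun w hw => div_pos hb hw) fun x hx => ?_
  exact ⟨b / x, div_pos hb hx, by field_simp [(mem_Ioi.1 hx).ne']⟩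

theorem injOn_const_div_Ioi {b : ℝ} (hb : 0 < b) : InjOn (fun w : ℝ => b / w) (Ioi 0) :=
  fun x hx y hy hxy => by
    simpa [div_eq_mul_inv, hb.ne'] using hxy

theorem strictMonoOn_sub_const_div {b : ℝ} (hb : 0 < b) :
    StrictMonoOn (fun w : ℝ => w - b / w) (Ioi 0) := fun x hx y _ hxy => by
  have : b / y < b / x := div_lt_div_of_pos_left hb hx hxy
  dsimp only
  linarith

theorem image_sub_const_div_Ioi {b : ℝ} (hb : 0 < b) :
    (fun w : ℝ => w - b / w) '' Ioi 0 = univ := by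
  refine eq_univ_of_forall fun u => ?_
  -- `w = (u + √(u² + 4b)) / 2` is the positive root of `w² - u w - b`.
  set r := √(u ^ 2 + 4 * b)
  have hr : r ^ 2 = u ^ 2 + 4 * b := sq_sqrt (by positivity)
  have hur : 0 < u + r := by nlinarith [sqrt_nonneg (u ^ 2 + 4 * b)]
  refine ⟨(u + r) / 2, half_pos hur, ?_⟩
  field_simp
  nlinarith

theorem integral_Ioi_comp_sub_const_div {E : Type*} [NormedAddCommGroup E] [NormedSpace ℝ E]
    {f : ℝ → E} (hf : Continuous f) (hfi : Integrable f) (heven : Function.Even f)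
    {b : ℝ} (hb : 0 < b) :
    ∫ w in Ioi 0, f (w - b / w) = (2 : ℝ)⁻¹ • ∫ x, f x := by
  set φ : ℝ → ℝ := fun w => w - b / w
  have hφ' : ∀ w ∈ Ioi (0 : ℝ), HasDerivWithinAt φ (1 + b / w ^ 2) (Ioi 0) w := fun w hw =>
    (((hasDerivAt_id w).sub (hasDerivAt_const_div b (mem_Ioi.1 hw).ne')).congr_deriv
      (by simp only [sub_neg_eq_add])).hasDerivWithinAt
  have himage : φ '' Ioi 0 = univ := image_sub_const_div_Ioi hb
  have habs : ∀ w ∈ Ioi (0 : ℝ), |1 + b / w ^ 2| = 1 + b / w ^ 2 := fun w hw =>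
    abs_of_pos (by have := mem_Ioi.1 hw; positivity)
  have hinj := (strictMonoOn_sub_const_div hb).injOn
  have hint : IntegrableOn (fun w => (1 + b / w ^ 2) • f (φ w)) (Ioi 0) := by
    have := (integrableOn_image_iff_integrableOn_abs_deriv_smul measurableSet_Ioi hφ' hinj f).1
      (by rw [himage]; exact hfi.integrableOn)
    exact this.congr_fun (fun w hw => by simp only [habs w hw]) measurableSet_Ioi
  have hcomp : IntegrableOn (fun w => f (φ w)) (Ioi 0) := by
    refine Integrable.mono hint
      ((hf.comp_continuousOn ?_).aestronglyMeasurable measurableSet_Ioi) ?_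
    · exact continuousOn_id.sub
        (continuousOn_const.div continuousOn_id fun w hw => (mem_Ioi.1 hw).ne')
    refine (ae_restrict_iff' measurableSet_Ioi).2 (ae_of_all _ fun w hw => ?_)
    rw [norm_smul, Real.norm_of_nonneg (by have := mem_Ioi.1 hw; positivity)]
    exact le_mul_of_one_le_left (norm_nonneg _) (by have := mem_Ioi.1 hw; simp; positivity)
  -- `w ↦ b / w` swaps the two halves of `(1 + b / w²) • f (φ w)`, since `φ (b / w) = -φ w`.
  have hswap : ∫ w in Ioi 0, (b / w ^ 2) • f (φ w) = ∫ w in Ioi 0, f (φ w) := by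
    have := integral_image_eq_integral_abs_deriv_smul measurableSet_Ioi
      (fun w hw => (hasDerivAt_const_div b (mem_Ioi.1 hw).ne').hasDerivWithinAt)
      (injOn_const_div_Ioi hb) (fun w => f (φ w))
    rw [image_const_div_Ioi hb] at this
    rw [this]
    refine setIntegral_congr_fun measurableSet_Ioi fun w hw => ?_
    have hw0 := (mem_Ioi.1 hw).ne'
    have : φ (b / w) = -φ w := by simp only [φ]; field_simp; ring
    rw [abs_neg, abs_of_pos (by have := mem_Ioi.1 hw; positivity), this, heven]
  have hrest : IntegrableOn (fun w => (b / w ^ 2) • f (φ w)) (Ioi 0) :=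
    (hint.sub hcomp).congr_fun
      (fun w _ => by simp only [Pi.sub_apply, add_smul, one_smul, add_sub_cancel_left])
      measurableSet_Ioi
  calc ∫ w in Ioi 0, f (φ w)
      = (2 : ℝ)⁻¹ • ∫ w in Ioi 0, (1 + b / w ^ 2) • f (φ w) := by
        simp only [add_smul, one_smul]
        rw [integral_add hcomp hrest, hswap, ← two_smul ℝ, smul_smul]
        norm_num
    _ = (2 : ℝ)⁻¹ • ∫ x, f x := by
        conv_rhs => rw [← setIntegral_univ, ← himage,
          integral_image_eq_integral_abs_deriv_smul measurableSet_Ioi hφ' hinj]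
        exact congrArg _
          (setIntegral_congr_fun measurableSet_Ioi fun w hw => by simp only [habs w hw])

theorem integral_Ioi_exp_neg_sq_sub_sq_div_sq {c : ℝ} (hc : 0 ≤ c) :
    ∫ w in Ioi 0, exp (-w ^ 2 - c ^ 2 / w ^ 2) = √π / 2 * exp (-(2 * c)) := by
  rcases hc.eq_or_lt with rfl | hc
  · simpa using integral_gaussian_Ioi 1
  have hsq : ∀ w ∈ Ioi (0 : ℝ),
      exp (-w ^ 2 - c ^ 2 / w ^ 2) = exp (-(2 * c)) * exp (-(w - c / w) ^ 2) :=
    fun w hw => by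
      rw [← exp_add]
      congr 1
      field_simp [(mem_Ioi.1 hw).ne']
      ring
  have hgauss_int : ∫ x : ℝ, exp (-x ^ 2) = √π := by simpa using integral_gaussian 1
  have hgauss : Integrable fun x : ℝ => exp (-x ^ 2) := by
    simpa using integrable_exp_neg_mul_sq one_pos
  rw [setIntegral_congr_fun measurableSet_Ioi hsq, integral_const_mul,
    (integral_Ioi_comp_sub_const_div (f := fun x => exp (-x ^ 2)) (by fun_prop) hgauss
      (fun x => by simp) hc), smul_eq_mul, hgauss_int]
  ring

theorem hasDerivAt_sq_div_two_mul_sq (t : ℝ) {w : ℝ} (hw : w ≠ 0) :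
    HasDerivAt (fun w : ℝ => t ^ 2 / (2 * w ^ 2)) (-(t ^ 2 / w ^ 3)) w := by
  refine ((hasDerivAt_const w (t ^ 2)).div ((hasDerivAt_pow 2 w).const_mul 2)
    (by positivity)).congr_deriv ?_
  field_simp
  ring

theorem injOn_sq_div_two_mul_sq {t : ℝ} (ht : t ≠ 0) :
    InjOn (fun w : ℝ => t ^ 2 / (2 * w ^ 2)) (Ioi 0) :=
  fun x (hx : 0 < x) y (hy : 0 < y) hxy => by
    refine (sq_eq_sq₀ hx.le hy.le).1 ?_
    field_simp at hxy
    simpa [ht, eq_comm] using hxy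

theorem image_sq_div_two_mul_sq_Ioi {t : ℝ} (ht : t ≠ 0) :
    (fun w : ℝ => t ^ 2 / (2 * w ^ 2)) '' Ioi 0 = Ioi 0 := by
  refine Subset.antisymm (image_subset_iff.2 fun w (hw : 0 < w) =>
    show 0 < t ^ 2 / (2 * w ^ 2) by positivity)
    fun s (hs : 0 < s) => ⟨|t| / √(2 * s), show 0 < |t| / √(2 * s) by positivity, ?_⟩
  dsimp only
  rw [div_pow, sq_abs, sq_sqrt (by positivity)]
  field_simp

theorem abs_deriv_mul_relSubordinatorDensity (a : ℝ) {t w : ℝ} (ht : 0 < t) (hw : 0 < w) :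
    |-(t ^ 2 / w ^ 3)| * relSubordinatorDensity a t (t ^ 2 / (2 * w ^ 2)) =
      2 / √π * exp (t * a) * exp (-w ^ 2 - (a * t / 2) ^ 2 / w ^ 2) := by
  have hcube : 2 * π * (t ^ 2 / (2 * w ^ 2)) ^ 3 = (t ^ 3 / (2 * w ^ 3)) ^ 2 * π := by
    field_simp
  have hexp : -(t ^ 2 / (t ^ 2 / (2 * w ^ 2)) + a ^ 2 * (t ^ 2 / (2 * w ^ 2))) / 2 =
      -w ^ 2 - (a * t / 2) ^ 2 / w ^ 2 := by
    field_simp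
    ring
  rw [relSubordinatorDensity, hcube, sqrt_mul (sq_nonneg _), sqrt_sq (by positivity), hexp,
    abs_neg, abs_of_pos (by positivity)]
  field_simp

theorem integrableOn_relSubordinatorDensity (a : ℝ) {t : ℝ} (ht : 0 < t) :
    IntegrableOn (relSubordinatorDensity a t) (Ioi 0) := by
  rw [← image_sq_div_two_mul_sq_Ioi ht.ne', integrableOn_image_iff_integrableOn_abs_deriv_smul
    measurableSet_Ioi
    (fun w hw => (hasDerivAt_sq_div_two_mul_sq t (mem_Ioi.1 hw).ne').hasDerivWithinAt)
    (injOn_sq_div_two_mul_sq ht.ne')]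
  refine IntegrableOn.congr_fun ?_ (fun w hw => by
    rw [smul_eq_mul, abs_deriv_mul_relSubordinatorDensity a ht (mem_Ioi.1 hw)]) measurableSet_Ioi
  refine Integrable.const_mul (Integrable.mono (integrableOn_Ioi_exp_neg_mul_sq_iff.2 one_pos)
    (by fun_prop) (ae_of_all _ fun w => ?_)) _
  rw [norm_of_nonneg (exp_pos _).le, norm_of_nonneg (exp_pos _).le, exp_le_exp]
  nlinarith [div_nonneg (sq_nonneg (a * t / 2)) (sq_nonneg w)]

theorem relSubordinatorDensity_mul_exp {m c : ℝ} (hc : 0 ≤ c + m ^ 2) (t s : ℝ) :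
    relSubordinatorDensity m t s * exp (-(s * c) / 2) =
      exp (-(t * (√(c + m ^ 2) - m))) * relSubordinatorDensity (√(c + m ^ 2)) t s := by
  set a := √(c + m ^ 2)
  have htilt : exp (t * m) = exp (-(t * (a - m))) * exp (t * a) := by
    rw [← exp_add]
    ring_nf
  have hdamp : exp (-(t ^ 2 / s + m ^ 2 * s) / 2) * exp (-(s * c) / 2) =
      exp (-(t ^ 2 / s + a ^ 2 * s) / 2) := by
    rw [← exp_add, sq_sqrt hc]
    ring_nf
  rw [relSubordinatorDensity, relSubordinatorDensity, htilt, ← hdamp]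
  ring

theorem integrableOn_relSubordinatorDensity_mul_exp {m c t : ℝ} (hc : 0 ≤ c + m ^ 2)
    (ht : 0 < t) :
    IntegrableOn (fun s => relSubordinatorDensity m t s * exp (-(s * c) / 2)) (Ioi 0) := by
  simp only [relSubordinatorDensity_mul_exp hc]
  exact (integrableOn_relSubordinatorDensity _ ht).const_mul _

theorem integral_relSubordinatorDensity_mul_exp {m c t : ℝ} (hc : 0 ≤ c + m ^ 2) (ht : 0 < t) :
    ∫ s in Ioi 0, relSubordinatorDensity m t s * exp (-(s * c) / 2) =
      exp (-(t * (√(c + m ^ 2) - m))) := by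
  simp only [relSubordinatorDensity_mul_exp hc]
  rw [integral_const_mul, integral_relSubordinatorDensity (sqrt_nonneg _) ht, mul_one]

theorem characteristic_function_joint_process_general (m t : ℝ) (ht : 0 < t)
    (ξ : EuclideanSpace ℝ (Fin 3)) (z : ℝ) :
    ∫ s in Set.Ioi (0 : ℝ),
        ((relSubordinatorDensity m t s * Real.exp (-(s * ‖ξ‖ ^ 2) / 2) : ℝ) : ℂ) *
          ((Real.cos z : ℂ) + Complex.I * (Real.exp (-(2 * s)) : ℂ) * (Real.sin z : ℂ))
      = ((Real.exp (-(t * (Real.sqrt (‖ξ‖ ^ 2 + m ^ 2) - m))) * Real.cos z : ℝ) : ℂ)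
          + Complex.I *
            ((Real.exp (-(t * (Real.sqrt (‖ξ‖ ^ 2 + 4 + m ^ 2) - m))) * Real.sin z : ℝ) : ℂ) := by
  have hξ₁ : 0 ≤ ‖ξ‖ ^ 2 + m ^ 2 := by positivity
  have hξ₂ : 0 ≤ ‖ξ‖ ^ 2 + 4 + m ^ 2 := by positivity
  have hsplit (s : ℝ) :
      ((relSubordinatorDensity m t s * exp (-(s * ‖ξ‖ ^ 2) / 2) : ℝ) : ℂ) *
          ((cos z : ℂ) + Complex.I * (exp (-(2 * s)) : ℂ) * (sin z : ℂ)) =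
        ((relSubordinatorDensity m t s * exp (-(s * ‖ξ‖ ^ 2) / 2) * cos z : ℝ) : ℂ) +
          Complex.I *
            ((relSubordinatorDensity m t s * exp (-(s * (‖ξ‖ ^ 2 + 4)) / 2) * sin z : ℝ) : ℂ) := by
    have hshift :
        exp (-(s * (‖ξ‖ ^ 2 + 4)) / 2) = exp (-(s * ‖ξ‖ ^ 2) / 2) * exp (-(2 * s)) := by
      rw [← exp_add]
      ring_nf
    push_cast [hshift]
    ring
  simp only [hsplit]
  rw [integral_add ((integrableOn_relSubordinatorDensity_mul_exp hξ₁ ht).mul_const _).ofReal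
      (((integrableOn_relSubordinatorDensity_mul_exp hξ₂ ht).mul_const _).ofReal.const_mul _),
    integral_const_mul, integral_complex_ofReal, integral_complex_ofReal, integral_mul_const,
    integral_mul_const, integral_relSubordinatorDensity_mul_exp hξ₁ ht,
    integral_relSubordinatorDensity_mul_exp hξ₂ ht]

/-- The characteristic function `E[e^{i ξ·B_{T_t}} e^{i z θ_{T_t}}]` of the joint
process `q_t = (B_{T_t}, θ_{T_t})` (with `B` three-dimensional Brownian motion,
`θ_s = (−1)^{N_s}` for a unit-intensity Poisson process `N`, and `T` the relativistic
subordinator, all independent), computed by conditioning on `T_t = s`: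
`∫₀^∞ p_t(s) e^{−s|ξ|²/2} (cos z + i e^{−2s} sin z) ds
  = e^{−t(√(|ξ|²+m²)−m)} cos z + i e^{−t(√(|ξ|²+4+m²)−m)} sin z`. -/
theorem characteristic_function_joint_process (m t : ℝ) (hm : 0 ≤ m) (ht : 0 < t)
    (ξ : EuclideanSpace ℝ (Fin 3)) (z : ℝ) :
    ∫ s in Set.Ioi (0 : ℝ),
        ((relSubordinatorDensity m t s * Real.exp (-(s * ‖ξ‖ ^ 2) / 2) : ℝ) : ℂ) *
          ((Real.cos z : ℂ) + Complex.I * (Real.exp (-(2 * s)) : ℂ) * (Real.sin z : ℂ))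
      = ((Real.exp (-(t * (Real.sqrt (‖ξ‖ ^ 2 + m ^ 2) - m))) * Real.cos z : ℝ) : ℂ)
          + Complex.I *
            ((Real.exp (-(t * (Real.sqrt (‖ξ‖ ^ 2 + 4 + m ^ 2) - m))) * Real.sin z : ℝ) : ℂ) :=
  characteristic_function_joint_process_general m t ht ξ z
end

section
/- Let (Ω₁, F₁, P₁) and (Ω₂, F₂, P₂) be probability spaces and let P = P₁ ⊗ P₂ be the product measure on Ω₁ × Ω₂. For each ω₂ ∈ Ω₂ let G(ω₂) ⊆ F₁ be a sub-σ-algebra, and define G = { A ∈ F₁ ⊗ F₂ : for every ω₂ ∈ Ω₂, the section {ω₁ : (ω₁,ω₂) ∈ A} belongs to G(ω₂) }; then G is a sub-σ-algebra of F₁ ⊗ F₂. Suppose Y : Ω₁ × Ω₂ → ℝ is P-integrable and Z : Ω₁ × Ω₂ → ℝ is G-measurable, P-integrable, and for P₂-almost every ω₂ the function Z(·, ω₂) is a version of the conditional expectation of Y(·, ω₂) given G(ω₂) under P₁ (i.e. Z(·,ω₂) is G(ω₂)-measurable and ∫_A Z(ω₁,ω₂) dP₁(ω₁) = ∫_A Y(ω₁,ω₂)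 dP₁(ω₁) for all A ∈ G(ω₂)). Then Z is a version of the conditional expectation E_P[Y | G]. -/
/-!
By Fubini, the integral of `Y` or `Z` over a set `s` of the section σ-algebra is the
`P₂`-integral of its integrals over the sections `s_ω₂ = {ω₁ | (ω₁, ω₂) ∈ s}`. Since
`s_ω₂ ∈ G(ω₂)`, the sectionwise conditional-expectation property makes the inner integrals of
`Z` and `Y` agree for `P₂`-a.e. `ω₂`, which is the defining property of `E_P[Y | G]`.
-/

open MeasureTheory

/-- Given a family `G ω₂` of sub-σ-algebras of `Ω₁` indexed by `ω₂ ∈ Ω₂`, the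
σ-algebra on `Ω₁ × Ω₂` of all product-measurable sets `A` such that for every `ω₂`
the section `{ω₁ | (ω₁,ω₂) ∈ A}` belongs to `G ω₂`. -/
def sectionSigmaAlgebra {Ω₁ Ω₂ : Type*} [MeasurableSpace Ω₁] [MeasurableSpace Ω₂]
    (G : Ω₂ → MeasurableSpace Ω₁) : MeasurableSpace (Ω₁ × Ω₂) :=
  (inferInstance : MeasurableSpace (Ω₁ × Ω₂)) ⊓
    ⨅ ω₂ : Ω₂, MeasurableSpace.map (fun ω₁ => (ω₁, ω₂)) (G ω₂)

theorem measurableSet_sectionSigmaAlgebra_iff {Ω₁ Ω₂ : Type*} [MeasurableSpace Ω₁]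
    [MeasurableSpace Ω₂] (G : Ω₂ → MeasurableSpace Ω₁) (A : Set (Ω₁ × Ω₂)) :
    MeasurableSet[sectionSigmaAlgebra G] A ↔
      MeasurableSet A ∧ ∀ ω₂, MeasurableSet[G ω₂] {ω₁ | (ω₁, ω₂) ∈ A} := by
  rw [sectionSigmaAlgebra, MeasurableSpace.measurableSet_inf,
    MeasurableSpace.measurableSet_iInf]
  rfl

theorem sectionSigmaAlgebra_le {Ω₁ Ω₂ : Type*} [MeasurableSpace Ω₁] [MeasurableSpace Ω₂]
    (G : Ω₂ → MeasurableSpace Ω₁) :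
    sectionSigmaAlgebra G ≤ (inferInstance : MeasurableSpace (Ω₁ × Ω₂)) :=
  inf_le_left

theorem setIntegral_prod_eq_integral_setIntegral_section {α β E : Type*}
    [MeasurableSpace α] [MeasurableSpace β] [NormedAddCommGroup E] [NormedSpace ℝ E]
    {μ : Measure α} {ν : Measure β} [SFinite μ] [SFinite ν]
    {s : Set (α × β)} (hs : MeasurableSet s) {f : α × β → E} (hf : Integrable f (μ.prod ν)) :
    ∫ z in s, f z ∂μ.prod ν = ∫ y, ∫ x in {x | (x, y) ∈ s}, f (x, y) ∂μ ∂ν := by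
  rw [← integral_indicator hs, integral_prod_symm _ (hf.indicator hs)]
  congr with y
  exact integral_indicator (measurable_prodMk_right hs)

theorem condexp_of_sectionwise_condexp_general {Ω₁ Ω₂ : Type*}
    [MeasurableSpace Ω₁] [MeasurableSpace Ω₂]
    (P₁ : Measure Ω₁) (P₂ : Measure Ω₂)
    [IsProbabilityMeasure P₁] [IsProbabilityMeasure P₂]
    (G : Ω₂ → MeasurableSpace Ω₁)
    (Y Z : Ω₁ × Ω₂ → ℝ)
    (hY : Integrable Y (P₁.prod P₂))
    (hZmeas : Measurable[sectionSigmaAlgebra G] Z)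
    (hZint : Integrable Z (P₁.prod P₂))
    (hsec : ∀ᵐ ω₂ ∂P₂,
      Measurable[G ω₂] (fun ω₁ => Z (ω₁, ω₂)) ∧
      ∀ A : Set Ω₁, MeasurableSet[G ω₂] A →
        ∫ ω₁ in A, Z (ω₁, ω₂) ∂P₁ = ∫ ω₁ in A, Y (ω₁, ω₂) ∂P₁) :
    (∀ A : Set (Ω₁ × Ω₂),
      MeasurableSet[sectionSigmaAlgebra G] A ↔
        MeasurableSet A ∧ ∀ ω₂ : Ω₂, MeasurableSet[G ω₂] {ω₁ : Ω₁ | (ω₁, ω₂) ∈ A}) ∧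
    Z =ᵐ[P₁.prod P₂] (P₁.prod P₂)[Y | sectionSigmaAlgebra G] := by
  refine ⟨measurableSet_sectionSigmaAlgebra_iff G, ?_⟩
  refine ae_eq_condExp_of_forall_setIntegral_eq (sectionSigmaAlgebra_le G) hY
    (fun _ _ _ => hZint.integrableOn) ?_ hZmeas.stronglyMeasurable.aestronglyMeasurable
  intro s hs _
  obtain ⟨hs_meas, hs_sections⟩ := (measurableSet_sectionSigmaAlgebra_iff G s).1 hs
  rw [setIntegral_prod_eq_integral_setIntegral_section hs_meas hZint,
    setIntegral_prod_eq_integral_setIntegral_section hs_meas hY]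
  refine integral_congr_ae ?_
  filter_upwards [hsec] with ω₂ hω₂ using hω₂.2 _ (hs_sections ω₂)

/-- Let `P = P₁ ⊗ P₂` be a product probability measure and `G` the σ-algebra on
`Ω₁ × Ω₂` whose members are the product-measurable sets all of whose `ω₂`-sections
belong to `G(ω₂)`. If `Y` is `P`-integrable and `Z` is `G`-measurable, `P`-integrable,
and for `P₂`-a.e. `ω₂` the function `Z(·,ω₂)` is a version of the conditional
expectation of `Y(·,ω₂)` given `G(ω₂)` under `P₁`, then `Z` is a version of the
conditional expectation `E_P[Y | G]`. -/
theorem condexp_of_sectionwise_condexp {Ω₁ Ω₂ : Type*}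
    [MeasurableSpace Ω₁] [MeasurableSpace Ω₂]
    (P₁ : Measure Ω₁) (P₂ : Measure Ω₂)
    [IsProbabilityMeasure P₁] [IsProbabilityMeasure P₂]
    (G : Ω₂ → MeasurableSpace Ω₁) (hG : ∀ ω₂, G ω₂ ≤ ‹MeasurableSpace Ω₁›)
    (Y Z : Ω₁ × Ω₂ → ℝ)
    (hY : Integrable Y (P₁.prod P₂))
    (hZmeas : Measurable[sectionSigmaAlgebra G] Z)
    (hZint : Integrable Z (P₁.prod P₂))
    (hsec : ∀ᵐ ω₂ ∂P₂,
      Measurable[G ω₂] (fun ω₁ => Z (ω₁, ω₂)) ∧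
      ∀ A : Set Ω₁, MeasurableSet[G ω₂] A →
        ∫ ω₁ in A, Z (ω₁, ω₂) ∂P₁ = ∫ ω₁ in A, Y (ω₁, ω₂) ∂P₁) :
    (∀ A : Set (Ω₁ × Ω₂),
      MeasurableSet[sectionSigmaAlgebra G] A ↔
        MeasurableSet A ∧ ∀ ω₂ : Ω₂, MeasurableSet[G ω₂] {ω₁ : Ω₁ | (ω₁, ω₂) ∈ A}) ∧
    Z =ᵐ[P₁.prod P₂] (P₁.prod P₂)[Y | sectionSigmaAlgebra G] :=
  condexp_of_sectionwise_condexp_general P₁ P₂ G Y Z hY hZmeas hZint hsec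
end
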